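/- A maximum-size path graph planarly polygon-embeddable in a convex polygon with n ≥ 3 vertices has exactly n - 3 edges. -/

import Mathlib

/-!
Upper bound: the `e` path edges together with the `n` sides are `e + n` pairwise non-crossing
chords of `n` points in convex position, and there are at most `2n - 3` such chords: split along
a chord whose line has points on both sides, and if no chord does, every point lies on at most
two chords. In convex position two chords `ab`, `cd` do not cross exactly when `c` and `d` are
not strictly on opposite sides of the line `ab`.

Lower bound: along the zig-zag path every later edge has both ends in the closed arc cut off by
an earlier edge, and the vertices of such an arc lie weakly on one side of its chord.
-/

open Set Function

/-- Points in the plane. -/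
abbrev Pt : Type := ℝ × ℝ

/-- The closed straight-line segment between two points. -/
def seg (a b : Pt) : Set Pt := segment ℝ a b

/-- Two vertex indices of an `n`-gon are adjacent (consecutive in the cyclic order). -/
def adjV {n : ℕ} [NeZero n] (i j : Fin n) : Prop := j = i + 1 ∨ i = j + 1

/-- The `i`-th boundary edge of the polygon with vertices `p`. -/
def edgeSeg {n : ℕ} [NeZero n] (p : Fin n → Pt) (i : Fin n) : Set Pt := seg (p i) (p (i + 1))

/-- Two segments are non-crossing: they meet at most in shared endpoints. -/
def NC (a b c d : Pt) : Prop := seg a b ∩ seg c d ⊆ ({a, b} ∩ {c, d} : Set Pt)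

/-- A simple polygon: at least 3 distinct vertices, and boundary edges meet only at
shared endpoints. -/
def IsSimplePolygon {n : ℕ} [NeZero n] (p : Fin n → Pt) : Prop :=
  3 ≤ n ∧ Function.Injective p ∧
    ∀ i j : Fin n, i ≠ j →
      edgeSeg p i ∩ edgeSeg p j ⊆ ({p i, p (i + 1)} ∩ {p j, p (j + 1)} : Set Pt)

/-- A convex polygon: a simple polygon whose vertices are in convex position. -/
def IsConvexPolygon {n : ℕ} [NeZero n] (p : Fin n → Pt) : Prop :=
  IsSimplePolygon p ∧ ConvexIndependent ℝ p

/-- `K` is the closed region bounded by the polygon `p`. -/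
def IsRegionOf {n : ℕ} [NeZero n] (p : Fin n → Pt) (K : Set Pt) : Prop :=
  IsCompact K ∧ closure (interior K) = K ∧ frontier K = ⋃ i, edgeSeg p i

/-- Vertex `a` and vertex `b` are visible from each other: the segment joining them does not
cross the polygon boundary (it meets each boundary edge only in shared endpoints). -/
def Visible {n : ℕ} [NeZero n] (p : Fin n → Pt) (a b : Fin n) : Prop :=
  ∀ i : Fin n, seg (p a) (p b) ∩ edgeSeg p i ⊆ ({p a, p b} ∩ {p i, p (i + 1)} : Set Pt)

/-- Cross product of `b - a` and `c - a`. -/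
def cross2 (a b c : Pt) : ℝ := (b.1 - a.1) * (c.2 - a.2) - (b.2 - a.2) * (c.1 - a.1)

/-- The vertices are listed counterclockwise (positive signed area). -/
def IsCCW {n : ℕ} [NeZero n] (p : Fin n → Pt) : Prop :=
  0 < ∑ i : Fin n, ((p i).1 * (p (i + 1)).2 - (p (i + 1)).1 * (p i).2)

/-- Vertex `i` of a counterclockwise polygon is reflex (interior angle greater than `π`). -/
def IsReflex {n : ℕ} [NeZero n] (p : Fin n → Pt) (i : Fin n) : Prop :=
  cross2 (p (i - 1)) (p i) (p (i + 1)) < 0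

/-- A pseudo-convex polygon: a simple (counterclockwise) polygon with no two consecutive
reflex vertices. -/
def IsPseudoConvex {n : ℕ} [NeZero n] (p : Fin n → Pt) : Prop :=
  IsSimplePolygon p ∧ IsCCW p ∧ ∀ i : Fin n, ¬ (IsReflex p i ∧ IsReflex p (i + 1))

/-- The set of vertices visible from `i`, together with `i` and its two boundary neighbours. -/
def visSet {n : ℕ} [NeZero n] (p : Fin n → Pt) (i : Fin n) : Set (Fin n) :=
  {j | Visible p i j ∨ j = i - 1 ∨ j = i ∨ j = i + 1}

/-- Vertex `i` is isolated: it sees fewer than five vertices (counting itself and its two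
neighbours), or exactly five and the two visible non-neighbours are adjacent to each other. -/
def IsIsolated {n : ℕ} [NeZero n] (p : Fin n → Pt) (i : Fin n) : Prop :=
  (visSet p i).ncard < 5 ∨
  ((visSet p i).ncard = 5 ∧
    ∀ u ∈ visSet p i, ∀ w ∈ visSet p i,
      u ∉ ({i - 1, i, i + 1} : Set (Fin n)) → w ∉ ({i - 1, i, i + 1} : Set (Fin n)) →
      u ≠ w → adjV u w)

/-- A straight-line planar polygon embedding of the cycle graph on `m` nodes into the polygon
`p` with bounded region `K`: nodes map injectively to polygon vertices, every cycle edge is a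
diagonal of the polygon (endpoints non-adjacent, hence not a polygon edge) lying inside `K`,
distinct cycle edges meet at most in shared endpoints, and cycle edges meet boundary edges at
most in shared endpoints. -/
def IsCycleEmbedding {n m : ℕ} [NeZero n] [NeZero m] (p : Fin n → Pt) (K : Set Pt)
    (f : Fin m → Fin n) : Prop :=
  Function.Injective f ∧
  (∀ k : Fin m, ¬ adjV (f k) (f (k + 1))) ∧
  (∀ k : Fin m, seg (p (f k)) (p (f (k + 1))) ⊆ K) ∧
  (∀ k l : Fin m, ({p (f k), p (f (k + 1))} : Set Pt) ≠ ({p (f l), p (f (l + 1))} : Set Pt) →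
    NC (p (f k)) (p (f (k + 1))) (p (f l)) (p (f (l + 1)))) ∧
  (∀ k : Fin m, ∀ i : Fin n,
    seg (p (f k)) (p (f (k + 1))) ∩ edgeSeg p i ⊆
      ({p (f k), p (f (k + 1))} ∩ {p i, p (i + 1)} : Set Pt))

/-- A straight-line planar polygon embedding of a path graph with `e` edges into the polygon
`p`: nodes map injectively to polygon vertices, every path edge is a diagonal (endpoints
non-adjacent), distinct path edges meet at most in shared endpoints, and path edges meet
polygon boundary edges at most in shared endpoints. -/
def IsPathEmbedding {n e : ℕ} [NeZero n] (p : Fin n → Pt) (f : Fin (e + 1) → Fin n) : Prop :=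
  Function.Injective f ∧
  (∀ k : Fin e, ¬ adjV (f k.castSucc) (f k.succ)) ∧
  (∀ k l : Fin e, k ≠ l →
    NC (p (f k.castSucc)) (p (f k.succ)) (p (f l.castSucc)) (p (f l.succ))) ∧
  (∀ k : Fin e, ∀ i : Fin n,
    seg (p (f k.castSucc)) (p (f k.succ)) ∩ edgeSeg p i ⊆
      ({p (f k.castSucc), p (f k.succ)} ∩ {p i, p (i + 1)} : Set Pt))

lemma cross2_swap_left (a b c : Pt) : cross2 b a c = -cross2 a b c := by
  simp only [cross2]; ring

lemma cross2_swap_right (a b c : Pt) : cross2 a c b = -cross2 a b c := by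
  simp only [cross2]; ring

@[simp] lemma cross2_self_left (a b : Pt) : cross2 a b a = 0 := by
  simp only [cross2]; ring

@[simp] lemma cross2_self_right (a b : Pt) : cross2 a b b = 0 := by
  simp only [cross2]; ring

lemma mul_cross2_swap (a b c d : Pt) :
    cross2 b a c * cross2 b a d = cross2 a b c * cross2 a b d := by
  rw [cross2_swap_left a b c, cross2_swap_left a b d, neg_mul_neg]

lemma cross2_lineMap (a b x y : Pt) (t : ℝ) :
    cross2 a b (AffineMap.lineMap x y t) = (1 - t) * cross2 a b x + t * cross2 a b y := by
  simp only [cross2, AffineMap.lineMap_apply_module, Prod.fst_add, Prod.snd_add, Prod.smul_fst,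
    Prod.smul_snd, smul_eq_mul]
  ring

lemma mem_seg_iff_lineMap {a b z : Pt} :
    z ∈ seg a b ↔ ∃ t ∈ Icc (0 : ℝ) 1, AffineMap.lineMap a b t = z := by
  rw [seg, segment_eq_image_lineMap, mem_image]

lemma cross2_eq_zero_of_mem_seg {a b z : Pt} (hz : z ∈ seg a b) : cross2 a b z = 0 := by
  obtain ⟨t, -, rfl⟩ := mem_seg_iff_lineMap.1 hz
  simp [cross2_lineMap]

lemma mem_line_of_cross2_eq_zero {a b z : Pt} (hab : a ≠ b) (hz : cross2 a b z = 0) :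
    z ∈ line[ℝ, a, b] := by
  have key : ∃ t : ℝ, z = AffineMap.lineMap a b t := by
    simp only [cross2] at hz
    by_cases h1 : b.1 - a.1 = 0
    · have h2 : b.2 - a.2 ≠ 0 := fun h2 => hab (Prod.ext (by linarith) (by linarith))
      refine ⟨(z.2 - a.2) / (b.2 - a.2), Prod.ext ?_ ?_⟩ <;>
        simp only [AffineMap.lineMap_apply_module, Prod.fst_add, Prod.snd_add, Prod.smul_fst,
          Prod.smul_snd, smul_eq_mul] <;> field_simp
      · linear_combination -hz
      · ring
    · refine ⟨(z.1 - a.1) / (b.1 - a.1), Prod.ext ?_ ?_⟩ <;>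
        simp only [AffineMap.lineMap_apply_module, Prod.fst_add, Prod.snd_add, Prod.smul_fst,
          Prod.smul_snd, smul_eq_mul] <;> field_simp
      · ring
      · linear_combination hz
  obtain ⟨t, rfl⟩ := key
  exact AffineMap.lineMap_mem_affineSpan_pair t a b

lemma mem_seg_or_of_cross2_eq_zero {a b z : Pt} (hab : a ≠ b) (hz : cross2 a b z = 0) :
    z ∈ seg a b ∨ a ∈ seg z b ∨ b ∈ seg a z := by
  rcases (collinear_insert_of_mem_affineSpan_pair
      (mem_line_of_cross2_eq_zero hab hz)).wbtw_or_wbtw_or_wbtw with h | h | h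
  · exact Or.inr (Or.inl (mem_segment_iff_wbtw.2 h))
  · exact Or.inr (Or.inr (mem_segment_iff_wbtw.2 h))
  · exact Or.inl (by rw [seg, segment_symm]; exact mem_segment_iff_wbtw.2 h)

section ConvexPosition

variable {s : Set Pt}

lemma ConvexIndependent.mem_of_mem_convexHull (hs : ConvexIndependent ℝ ((↑) : s → Pt))
    {x : Pt} {t : Set Pt} (hx : x ∈ s) (ht : t ⊆ s) (h : x ∈ convexHull ℝ t) : x ∈ t :=
  convexIndependent_set_iff_inter_convexHull_subset.1 hs t ht ⟨hx, h⟩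

lemma ConvexIndependent.eq_or_eq_of_mem_seg (hs : ConvexIndependent ℝ ((↑) : s → Pt))
    {a b x : Pt} (ha : a ∈ s) (hb : b ∈ s) (hx : x ∈ s) (h : x ∈ seg a b) : x = a ∨ x = b :=
  hs.mem_of_mem_convexHull hx (pair_subset ha hb) (by rwa [convexHull_pair])

lemma ConvexIndependent.eq_or_eq_of_cross2_eq_zero (hs : ConvexIndependent ℝ ((↑) : s → Pt))
    {a b x : Pt} (ha : a ∈ s) (hb : b ∈ s) (hx : x ∈ s) (hab : a ≠ b) (h : cross2 a b x = 0) :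
    x = a ∨ x = b := by
  rcases mem_seg_or_of_cross2_eq_zero hab h with h | h | h
  · exact hs.eq_or_eq_of_mem_seg ha hb hx h
  · rcases hs.eq_or_eq_of_mem_seg hx hb ha h with rfl | rfl
    exacts [Or.inl rfl, absurd rfl hab]
  · rcases hs.eq_or_eq_of_mem_seg ha hx hb h with rfl | rfl
    exacts [absurd rfl hab, Or.inr rfl]

lemma ConvexIndependent.cross2_ne_zero (hs : ConvexIndependent ℝ ((↑) : s → Pt))
    {a b x : Pt} (ha : a ∈ s) (hb : b ∈ s) (hx : x ∈ s) (hab : a ≠ b) (hxa : x ≠ a)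
    (hxb : x ≠ b) : cross2 a b x ≠ 0 := fun h =>
  (hs.eq_or_eq_of_cross2_eq_zero ha hb hx hab h).elim hxa hxb

/-- If `c, d` lie strictly on opposite sides of the line `ab`, then `cd` meets that line in a
point `z`; convex position forces `z` onto the segment `ab`, so the two segments cross. -/
lemma ConvexIndependent.zero_le_mul_cross2_of_nc (hs : ConvexIndependent ℝ ((↑) : s → Pt))
    {a b c d : Pt} (ha : a ∈ s) (hb : b ∈ s) (hc : c ∈ s) (hd : d ∈ s) (hab : a ≠ b)
    (h : NC a b c d) : 0 ≤ cross2 a b c * cross2 a b d := by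
  by_contra! hneg
  set X := cross2 a b c
  set Y := cross2 a b d
  have hX : X ≠ 0 := fun h0 => by simp [h0] at hneg
  have hY : Y ≠ 0 := fun h0 => by simp [h0] at hneg
  have hXY : X - Y ≠ 0 := fun h0 => by
    rw [sub_eq_zero.1 h0] at hneg; nlinarith [mul_self_nonneg Y]
  set z := AffineMap.lineMap c d (X / (X - Y)) with hzdef
  have hz0 : cross2 a b z = 0 := by
    rw [hzdef, cross2_lineMap]
    field_simp
    ring
  have hzcd : z ∈ seg c d := by
    refine mem_seg_iff_lineMap.2 ⟨X / (X - Y), ⟨?_, ?_⟩, rfl⟩ <;>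
    rcases mul_neg_iff.1 hneg with ⟨hX', hY'⟩ | ⟨hX', hY'⟩
    · exact div_nonneg hX'.le (by linarith)
    · exact div_nonneg_of_nonpos hX'.le (by linarith)
    · rw [div_le_one (by linarith)]; linarith
    · rw [div_le_one_of_neg (by linarith)]; linarith
  have hzc : z ≠ c := fun h => hX (by rw [h] at hz0; exact hz0)
  have hzd : z ≠ d := fun h => hY (by rw [h] at hz0; exact hz0)
  have hz_hull : ∀ w : Pt, seg z w ⊆ convexHull ℝ {c, d, w} := fun w =>
    (convex_convexHull ℝ _).segment_subset
      (convexHull_mono (pair_subset (mem_insert c _) (mem_insert_of_mem c (mem_insert d _)))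
        (by rwa [convexHull_pair]))
      (subset_convexHull ℝ _ (by simp))
  have hcds : ∀ {w : Pt}, w ∈ s → ({c, d, w} : Set Pt) ⊆ s := fun hw =>
    insert_subset hc (pair_subset hd hw)
  rcases mem_seg_or_of_cross2_eq_zero hab hz0 with hzab | hazb | hbaz
  · rcases (h ⟨hzab, hzcd⟩).2 with h' | h'
    exacts [hzc h', hzd h']
  · have := hs.mem_of_mem_convexHull ha (hcds hb) (hz_hull b hazb)
    simp only [mem_insert_iff, mem_singleton_iff] at this
    rcases this with rfl | rfl | rfl
    exacts [hX (cross2_self_left _ _), hY (cross2_self_left _ _), hab rfl]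
  · have := hs.mem_of_mem_convexHull hb (hcds ha) (hz_hull a (by rwa [seg, segment_symm]))
    simp only [mem_insert_iff, mem_singleton_iff] at this
    rcases this with rfl | rfl | rfl
    exacts [hX (cross2_self_right _ _), hY (cross2_self_right _ _), hab rfl]

lemma ConvexIndependent.nc_of_zero_le_mul_cross2 (hs : ConvexIndependent ℝ ((↑) : s → Pt))
    {a b c d : Pt} (ha : a ∈ s) (hb : b ∈ s) (hc : c ∈ s) (hd : d ∈ s) (hab : a ≠ b)
    (hcd : ¬ (c ∈ ({a, b} : Set Pt) ∧ d ∈ ({a, b} : Set Pt)))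
    (h : 0 ≤ cross2 a b c * cross2 a b d) : NC a b c d := by
  rintro z ⟨hzab, hzcd⟩
  obtain ⟨t, ⟨ht0, ht1⟩, rfl⟩ := mem_seg_iff_lineMap.1 hzcd
  have hz := cross2_eq_zero_of_mem_seg hzab
  rw [cross2_lineMap] at hz
  have hmem : ∀ {x}, x ∈ s → cross2 a b x = 0 → x ∈ ({a, b} : Set Pt) := fun hx h0 =>
    hs.eq_or_eq_of_cross2_eq_zero ha hb hx hab h0
  by_cases hX : cross2 a b c = 0
  · have hY : cross2 a b d ≠ 0 := fun hY => hcd ⟨hmem hc hX, hmem hd hY⟩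
    obtain rfl : t = 0 := by
      rw [hX, mul_zero, zero_add] at hz
      exact (mul_eq_zero.1 hz).resolve_right hY
    rw [AffineMap.lineMap_apply_zero]
    exact ⟨hmem hc hX, Or.inl rfl⟩
  by_cases hY : cross2 a b d = 0
  · obtain rfl : t = 1 := by
      rw [hY, mul_zero, add_zero] at hz
      linarith [(mul_eq_zero.1 hz).resolve_right hX]
    rw [AffineMap.lineMap_apply_one]
    exact ⟨hmem hd hY, Or.inr rfl⟩
  have hpos : 0 < ((1 - t) * cross2 a b c + t * cross2 a b d) * cross2 a b c := by
    have hXY : 0 < cross2 a b c * cross2 a b d := lt_of_le_of_ne h (mul_ne_zero hX hY).symm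
    rcases eq_or_lt_of_le ht0 with rfl | ht0'
    · simpa using mul_self_pos.2 hX
    · nlinarith [mul_nonneg (sub_nonneg.2 ht1) (mul_self_nonneg (cross2 a b c))]
  rw [hz, zero_mul] at hpos
  exact absurd hpos (lt_irrefl 0)

end ConvexPosition

/-- Chords are encoded as two-point finsets, so that non-crossing is symmetric by construction. -/
def NonCrossing (e f : Finset Pt) : Prop :=
  convexHull ℝ (e : Set Pt) ∩ convexHull ℝ (f : Set Pt) ⊆ (e : Set Pt) ∩ f

lemma nonCrossing_pair {a b c d : Pt} : NonCrossing {a, b} {c, d} ↔ NC a b c d := by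
  simp only [NonCrossing, NC, seg, Finset.coe_pair, convexHull_pair]

lemma NonCrossing.symm {e f : Finset Pt} (h : NonCrossing e f) : NonCrossing f e := by
  rwa [NonCrossing, inter_comm, inter_comm (f : Set Pt)]

lemma NC.symm {a b c d : Pt} (h : NC a b c d) : NC c d a b :=
  nonCrossing_pair.1 (nonCrossing_pair.2 h).symm

lemma nc_swap_left {a b c d : Pt} : NC b a c d ↔ NC a b c d := by
  rw [← nonCrossing_pair, ← nonCrossing_pair, Finset.pair_comm]

lemma Finset.pair_eq_pair_iff {α : Type*} [DecidableEq α] {a b c d : α} :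
    ({a, b} : Finset α) = {c, d} ↔ a = c ∧ b = d ∨ a = d ∧ b = c := by
  rw [← Finset.coe_inj, Finset.coe_pair, Finset.coe_pair, Set.pair_eq_pair_iff]

lemma Finset.exists_eq_pair_of_mem {α : Type*} [DecidableEq α] {e : Finset α} {v : α}
    (hv : v ∈ e) (he : e.card = 2) :
    ∃ x, x ≠ v ∧ e = {v, x} := by
  obtain ⟨x, y, hxy, rfl⟩ := Finset.card_eq_two.1 he
  rcases Finset.mem_insert.1 hv with rfl | hv
  · exact ⟨y, hxy.symm, rfl⟩
  · rw [Finset.mem_singleton.1 hv]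
    exact ⟨x, hxy, Finset.pair_comm _ _⟩

lemma mul_pos_trans {x y z : ℝ} (hxy : 0 < x * y) (hyz : 0 < y * z) : 0 < x * z := by
  have : 0 < x * z * (y * y) := by nlinarith [mul_pos hxy hyz]
  exact pos_of_mul_pos_left this (mul_self_nonneg y)

def LineSplits (S : Finset Pt) (a b : Pt) : Prop :=
  ∃ x ∈ S, ∃ y ∈ S, 0 < cross2 a b x ∧ cross2 a b y < 0

lemma mul_cross2_pos_of_not_lineSplits {S : Finset Pt} {a b x y : Pt} (h : ¬ LineSplits S a b)
    (hx : x ∈ S) (hy : y ∈ S) (hx0 : cross2 a b x ≠ 0) (hy0 : cross2 a b y ≠ 0) :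
    0 < cross2 a b x * cross2 a b y := by
  rcases hx0.lt_or_gt with hx' | hx' <;> rcases hy0.lt_or_gt with hy' | hy'
  · exact mul_pos_of_neg_of_neg hx' hy'
  · exact absurd ⟨y, hy, x, hx, hy', hx'⟩ h
  · exact absurd ⟨x, hx, y, hy, hx', hy'⟩ h
  · exact mul_pos hx' hy'

section ChordCount

variable {S : Finset Pt}

lemma ConvexIndependent.lineSplits_of_three
    (hS : ConvexIndependent ℝ ((↑) : ↥(S : Set Pt) → Pt))
    {v x₁ x₂ x₃ : Pt} (hv : v ∈ S) (h₁ : x₁ ∈ S) (h₂ : x₂ ∈ S) (h₃ : x₃ ∈ S)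
    (h₁v : x₁ ≠ v) (h₂v : x₂ ≠ v) (h₃v : x₃ ≠ v) (h₁₂ : x₁ ≠ x₂) (h₁₃ : x₁ ≠ x₃)
    (h₂₃ : x₂ ≠ x₃) : LineSplits S v x₁ ∨ LineSplits S v x₂ ∨ LineSplits S v x₃ := by
  by_contra! hns
  obtain ⟨hs₁, hs₂, hs₃⟩ := hns
  have hne : ∀ {x y}, x ∈ S → y ∈ S → x ≠ v → y ≠ v → x ≠ y → cross2 v x y ≠ 0 :=
    fun hx hy hxv hyv hxy => hS.cross2_ne_zero hv hx hy hxv.symm hyv hxy.symm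
  have p₁ := mul_cross2_pos_of_not_lineSplits hs₁ h₂ h₃ (hne h₁ h₂ h₁v h₂v h₁₂)
    (hne h₁ h₃ h₁v h₃v h₁₃)
  have p₂ := mul_cross2_pos_of_not_lineSplits hs₂ h₁ h₃ (hne h₂ h₁ h₂v h₁v h₁₂.symm)
    (hne h₂ h₃ h₂v h₃v h₂₃)
  have p₃ := mul_cross2_pos_of_not_lineSplits hs₃ h₁ h₂ (hne h₃ h₁ h₃v h₁v h₁₃.symm)
    (hne h₃ h₂ h₃v h₂v h₂₃.symm)
  rw [cross2_swap_right v x₁ x₂] at p₂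
  rw [cross2_swap_right v x₁ x₃, cross2_swap_right v x₂ x₃, neg_mul_neg] at p₃
  nlinarith [mul_pos_trans p₁ p₃]

lemma card_le_of_forall_not_lineSplits (hS : ConvexIndependent ℝ ((↑) : ↥(S : Set Pt) → Pt))
    {E : Finset (Finset Pt)} (hE : ∀ e ∈ E, e ⊆ S ∧ e.card = 2)
    (hns : ∀ a b, {a, b} ∈ E → ¬ LineSplits S a b) : E.card ≤ S.card := by
  have key := Finset.card_mul_le_card_mul (s := E) (t := S) (fun e v => v ∈ e)
    (m := 2) (n := 2)
    (fun e he => by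
      rw [Finset.bipartiteAbove, Finset.filter_mem_eq_inter,
        Finset.inter_eq_right.2 (hE e he).1, (hE e he).2])
    (fun v hv => by
      by_contra! h3
      obtain ⟨e₁, he₁, e₂, he₂, e₃, he₃, h₁₂, h₁₃, h₂₃⟩ := Finset.two_lt_card.1 h3
      simp only [Finset.bipartiteBelow, Finset.mem_filter] at he₁ he₂ he₃
      obtain ⟨x₁, h₁v, rfl⟩ := Finset.exists_eq_pair_of_mem he₁.2 (hE _ he₁.1).2
      obtain ⟨x₂, h₂v, rfl⟩ := Finset.exists_eq_pair_of_mem he₂.2 (hE _ he₂.1).2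
      obtain ⟨x₃, h₃v, rfl⟩ := Finset.exists_eq_pair_of_mem he₃.2 (hE _ he₃.1).2
      have hx : ∀ {x}, {v, x} ∈ E → x ∈ S := fun h => (hE _ h).1 (by simp)
      rcases hS.lineSplits_of_three hv (hx he₁.1) (hx he₂.1) (hx he₃.1) h₁v h₂v h₃v
          (by rintro rfl; exact h₁₂ rfl) (by rintro rfl; exact h₁₃ rfl)
          (by rintro rfl; exact h₂₃ rfl) with h | h | h
      exacts [hns _ _ he₁.1 h, hns _ _ he₂.1 h, hns _ _ he₃.1 h])
  omega

lemma ConvexIndependent.card_filter_add_card_filter_le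
    (hS : ConvexIndependent ℝ ((↑) : ↥(S : Set Pt) → Pt)) {a b : Pt} (ha : a ∈ S) (hb : b ∈ S)
    (hab : a ≠ b) :
    (S.filter (fun w => 0 ≤ cross2 a b w)).card + (S.filter (fun w => cross2 a b w ≤ 0)).card ≤
      S.card + 2 := by
  have hinter : S.filter (fun w => 0 ≤ cross2 a b w) ∩ S.filter (fun w => cross2 a b w ≤ 0) ⊆
      {a, b} := fun w hw => by
    simp only [Finset.mem_inter, Finset.mem_filter] at hw
    rcases hS.eq_or_eq_of_cross2_eq_zero ha hb hw.1.1 hab (le_antisymm hw.2.2 hw.1.2)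
      with rfl | rfl <;> simp
  have := Finset.card_union_add_card_inter (S.filter (fun w => 0 ≤ cross2 a b w))
    (S.filter (fun w => cross2 a b w ≤ 0))
  have := Finset.card_le_card
    (Finset.union_subset (Finset.filter_subset (fun w => 0 ≤ cross2 a b w) S)
      (Finset.filter_subset (fun w => cross2 a b w ≤ 0) S))
  have := (Finset.card_le_card hinter).trans Finset.card_le_two
  omega

/-- Every chord lies weakly on one side of the chord `ab`, and `ab` itself lies on both. -/
lemma ConvexIndependent.card_add_one_le_card_filter_add
    (hS : ConvexIndependent ℝ ((↑) : ↥(S : Set Pt) → Pt))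
    {E : Finset (Finset Pt)} (hE : ∀ e ∈ E, e ⊆ S ∧ e.card = 2)
    (hnc : (E : Set (Finset Pt)).Pairwise NonCrossing) {a b : Pt} (hab : {a, b} ∈ E)
    {T T' : Finset Pt} (hT : ∀ w ∈ S, 0 ≤ cross2 a b w → w ∈ T)
    (hT' : ∀ w ∈ S, cross2 a b w ≤ 0 → w ∈ T') :
    E.card + 1 ≤ (E.filter (· ⊆ T)).card + (E.filter (· ⊆ T')).card := by
  obtain ⟨habS, habcard⟩ := hE _ hab
  have ha : a ∈ S := habS (by simp)
  have hb : b ∈ S := habS (by simp)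
  have hne : a ≠ b := by rintro rfl; simp at habcard
  have hcover : E ⊆ E.filter (· ⊆ T) ∪ E.filter (· ⊆ T') := fun e he => by
    obtain ⟨u, v, -, rfl⟩ := Finset.card_eq_two.1 (hE e he).2
    have hu : u ∈ S := (hE _ he).1 (by simp)
    have hv : v ∈ S := (hE _ he).1 (by simp)
    have hsign : 0 ≤ cross2 a b u * cross2 a b v := by
      by_cases hsame : ({u, v} : Finset Pt) = {a, b}
      · rcases Finset.pair_eq_pair_iff.1 hsame with ⟨rfl, rfl⟩ | ⟨rfl, rfl⟩ <;> simp
      · exact hS.zero_le_mul_cross2_of_nc ha hb hu hv hne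
          (nonCrossing_pair.1 (hnc hab he (Ne.symm hsame)))
    rcases mul_nonneg_iff.1 hsign with ⟨hu', hv'⟩ | ⟨hu', hv'⟩
    · exact Finset.mem_union_left _ (Finset.mem_filter.2
        ⟨he, Finset.insert_subset (hT u hu hu') (by simpa using hT v hv hv')⟩)
    · exact Finset.mem_union_right _ (Finset.mem_filter.2
        ⟨he, Finset.insert_subset (hT' u hu hu') (by simpa using hT' v hv hv')⟩)
  have hab' : {a, b} ∈ E.filter (· ⊆ T) ∩ E.filter (· ⊆ T') := by
    simp [Finset.insert_subset_iff, hab, hT a ha, hT b hb, hT' a ha, hT' b hb]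
  have := Finset.card_union_add_card_inter (E.filter (· ⊆ T)) (E.filter (· ⊆ T'))
  have := Finset.card_le_card hcover
  have := Finset.card_pos.2 ⟨_, hab'⟩
  omega

theorem card_add_three_le_of_pairwise_nonCrossing
    (hS : ConvexIndependent ℝ ((↑) : ↥(S : Set Pt) → Pt)) (h3 : 3 ≤ S.card)
    {E : Finset (Finset Pt)} (hE : ∀ e ∈ E, e ⊆ S ∧ e.card = 2)
    (hnc : (E : Set (Finset Pt)).Pairwise NonCrossing) : E.card + 3 ≤ 2 * S.card := by
  induction S using Finset.strongInduction generalizing E with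
  | H S ih =>
  by_cases hsplit : ∃ a b, {a, b} ∈ E ∧ LineSplits S a b
  swap
  · push Not at hsplit
    have := card_le_of_forall_not_lineSplits hS hE hsplit
    omega
  obtain ⟨a, b, hab, x, hx, y, hy, hxpos, hyneg⟩ := hsplit
  have ha : a ∈ S := (hE _ hab).1 (by simp)
  have hb : b ∈ S := (hE _ hab).1 (by simp)
  have hne : a ≠ b := by rintro rfl; simpa using (hE _ hab).2
  set Sp := S.filter (fun w => 0 ≤ cross2 a b w)
  set Sm := S.filter (fun w => cross2 a b w ≤ 0)
  have hSp : Sp ⊂ S := Finset.filter_ssubset.2 ⟨y, hy, by linarith⟩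
  have hSm : Sm ⊂ S := Finset.filter_ssubset.2 ⟨x, hx, by linarith⟩
  have hx' : x ≠ a ∧ x ≠ b := ⟨by rintro rfl; simp at hxpos, by rintro rfl; simp at hxpos⟩
  have hy' : y ≠ a ∧ y ≠ b := ⟨by rintro rfl; simp at hyneg, by rintro rfl; simp at hyneg⟩
  have hSp3 : 3 ≤ Sp.card := Finset.two_lt_card.2 ⟨a, by simpa [Sp], b, by simpa [Sp],
    x, by simpa [Sp] using ⟨hx, hxpos.le⟩, hne, hx'.1.symm, hx'.2.symm⟩
  have hSm3 : 3 ≤ Sm.card := Finset.two_lt_card.2 ⟨a, by simpa [Sm], b, by simpa [Sm],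
    y, by simpa [Sm] using ⟨hy, hyneg.le⟩, hne, hy'.1.symm, hy'.2.symm⟩
  have hsub : ∀ {T : Finset Pt}, ∀ e ∈ E.filter (· ⊆ T), e ⊆ T ∧ e.card = 2 :=
    fun e he => ⟨(Finset.mem_filter.1 he).2, (hE e (Finset.mem_filter.1 he).1).2⟩
  have hpw : ∀ T : Finset Pt,
      ((E.filter (· ⊆ T) : Finset _) : Set (Finset Pt)).Pairwise NonCrossing :=
    fun T => hnc.mono (Finset.coe_subset.2 (Finset.filter_subset _ E))
  have := ih Sp hSp (hS.mono (Finset.coe_subset.2 hSp.subset)) hSp3 hsub (hpw Sp)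
  have := ih Sm hSm (hS.mono (Finset.coe_subset.2 hSm.subset)) hSm3 hsub (hpw Sm)
  have : Sp.card + Sm.card ≤ S.card + 2 := hS.card_filter_add_card_filter_le ha hb hne
  have := hS.card_add_one_le_card_filter_add hE hnc hab (T := Sp) (T' := Sm)
    (fun w hw h => Finset.mem_filter.2 ⟨hw, h⟩) (fun w hw h => Finset.mem_filter.2 ⟨hw, h⟩)
  omega

end ChordCount

section Polygon

open Fin.NatCast

lemma Fin.natCast_inj_of_lt {n : ℕ} [NeZero n] {s t : ℕ} (hs : s < n) (ht : t < n) :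
    (s : Fin n) = t ↔ s = t := by
  refine ⟨fun h => ?_, by rintro rfl; rfl⟩
  simpa only [Fin.val_cast_of_lt hs, Fin.val_cast_of_lt ht] using congrArg Fin.val h

lemma Fin.add_natCast_inj {n : ℕ} [NeZero n] (a : Fin n) {s t : ℕ} (hs : s < n) (ht : t < n) :
    a + (s : Fin n) = a + t ↔ s = t := by
  rw [add_right_inj, Fin.natCast_inj_of_lt hs ht]

lemma Fin.add_one_ne_self {n : ℕ} [NeZero n] (hn : 2 ≤ n) (i : Fin n) : i + 1 ≠ i := by
  simpa using (Fin.add_natCast_inj i (s := 1) (t := 0) (by omega) (by omega)).not.2 one_ne_zero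

lemma Fin.add_one_add_one_ne_self {n : ℕ} [NeZero n] (hn : 3 ≤ n) (i : Fin n) :
    i + 1 + 1 ≠ i := by
  have := (Fin.add_natCast_inj i (s := 2) (t := 0) (by omega) (by omega)).not.2 two_ne_zero
  rwa [Nat.cast_ofNat, Nat.cast_zero, add_zero, ← one_add_one_eq_two, ← add_assoc] at this

variable {n : ℕ} [NeZero n] {p : Fin n → Pt}

lemma IsConvexPolygon.cross2_ne_zero (hp : IsConvexPolygon p) {i j k : Fin n} (hij : i ≠ j)
    (hki : k ≠ i) (hkj : k ≠ j) : cross2 (p i) (p j) (p k) ≠ 0 :=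
  hp.2.range.cross2_ne_zero (mem_range_self i) (mem_range_self j) (mem_range_self k)
    (hp.1.2.1.ne hij) (hp.1.2.1.ne hki) (hp.1.2.1.ne hkj)

noncomputable def pathChords (p : Fin n → Pt) {e : ℕ} (f : Fin (e + 1) → Fin n) :
    Fin e ⊕ Fin n → Finset Pt :=
  Sum.elim (fun k => {p (f k.castSucc), p (f k.succ)}) (fun i => {p i, p (i + 1)})

lemma IsPathEmbedding.injective_pathChords (hp : IsSimplePolygon p) {e : ℕ}
    {f : Fin (e + 1) → Fin n} (hf : IsPathEmbedding p f) : Injective (pathChords p f) := by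
  obtain ⟨hn, hpinj, -⟩ := hp
  have hpf : Injective (p ∘ f) := hpinj.comp hf.1
  refine Injective.sumElim (fun k l h => ?_) (fun i j h => ?_) (fun k i h => ?_)
  · rcases Finset.pair_eq_pair_iff.1 h with ⟨h, -⟩ | ⟨h₁, h₂⟩
    · exact Fin.castSucc_injective _ (hpf h)
    · have := Fin.ext_iff.1 (hpf h₁)
      have := Fin.ext_iff.1 (hpf h₂)
      simp only [Fin.val_castSucc, Fin.val_succ] at *
      omega
  · rcases Finset.pair_eq_pair_iff.1 h with ⟨h, -⟩ | ⟨h₁, h₂⟩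
    · exact hpinj h
    · have h₂ := hpinj h₂
      rw [hpinj h₁] at h₂
      exact absurd h₂ (Fin.add_one_add_one_ne_self hn j)
  · rcases Finset.pair_eq_pair_iff.1 h with ⟨h₁, h₂⟩ | ⟨h₁, h₂⟩
    · exact hf.2.1 k (Or.inl (by rw [hpinj h₁, hpinj h₂]))
    · exact hf.2.1 k (Or.inr (by rw [hpinj h₁, hpinj h₂]))

lemma IsPathEmbedding.nonCrossing_pathChords (hp : IsSimplePolygon p) {e : ℕ}
    {f : Fin (e + 1) → Fin n} (hf : IsPathEmbedding p f) {x y : Fin e ⊕ Fin n} (hxy : x ≠ y) :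
    NonCrossing (pathChords p f x) (pathChords p f y) := by
  obtain ⟨-, -, hcross, hside⟩ := hf
  rcases x with k | i <;> rcases y with l | j
  · exact nonCrossing_pair.2 (hcross k l (fun h => hxy (h ▸ rfl)))
  · exact nonCrossing_pair.2 (hside k j)
  · exact (nonCrossing_pair.2 (hside l i)).symm
  · exact nonCrossing_pair.2 (hp.2.2 i j (fun h => hxy (h ▸ rfl)))

theorem IsPathEmbedding.le (hp : IsConvexPolygon p) {e : ℕ} {f : Fin (e + 1) → Fin n}
    (hf : IsPathEmbedding p f) : e ≤ n - 3 := by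
  obtain ⟨hn, hpinj, -⟩ := hp.1
  have hchord : ∀ c ∈ Finset.univ.image (pathChords p f),
      c ⊆ Finset.univ.image p ∧ c.card = 2 := by
    simp only [Finset.mem_image, Finset.mem_univ, true_and, forall_exists_index,
      forall_apply_eq_imp_iff]
    rintro (k | i)
    · exact ⟨by simp [pathChords, Finset.insert_subset_iff],
        Finset.card_pair (hpinj.ne (hf.1.ne Fin.castSucc_lt_succ.ne))⟩
    · exact ⟨by simp [pathChords, Finset.insert_subset_iff],
        Finset.card_pair (hpinj.ne (Fin.add_one_ne_self (by omega) i).symm)⟩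
  have hS :
      ConvexIndependent ℝ ((↑) : ↥((Finset.univ.image p : Finset Pt) : Set Pt) → Pt) := by
    rw [Finset.coe_image, Finset.coe_univ, Set.image_univ]
    exact hp.2.range
  have := card_add_three_le_of_pairwise_nonCrossing hS
    (by rw [Finset.card_image_of_injective _ hpinj]; simpa using hn) hchord
    (by rw [Finset.coe_image, Finset.coe_univ, Set.image_univ]
        rintro _ ⟨x, rfl⟩ _ ⟨y, rfl⟩ hxy
        exact hf.nonCrossing_pathChords hp.1 (fun h => hxy (h ▸ rfl)))
  simp only [Finset.card_image_of_injective _ (hf.injective_pathChords hp.1),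
    Finset.card_image_of_injective _ hpinj, Finset.card_univ, Fintype.card_sum,
    Fintype.card_fin] at this
  omega

end Polygon

lemma mul_pos_of_chain {f : ℕ → ℝ} {lo hi : ℕ} (hne : ∀ s, lo ≤ s → s ≤ hi → f s ≠ 0)
    (hstep : ∀ s, lo ≤ s → s < hi → 0 ≤ f s * f (s + 1)) {s t : ℕ} (hs : lo ≤ s) (hs' : s ≤ hi)
    (ht : lo ≤ t) (ht' : t ≤ hi) : 0 < f s * f t := by
  have key : ∀ s, lo ≤ s → s ≤ hi → 0 < f lo * f s := by
    intro s hs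
    induction s, hs using Nat.le_induction with
    | base => exact fun h => mul_self_pos.2 (hne lo le_rfl h)
    | succ s hs ih =>
      intro h
      exact mul_pos_trans (ih (by omega)) (lt_of_le_of_ne (hstep s hs (by omega))
        (mul_ne_zero (hne s hs (by omega)) (hne (s + 1) (by omega) h)).symm)
  exact mul_pos_trans (by rw [mul_comm]; exact key s hs hs') (key t ht ht')

lemma adjV_comm {n : ℕ} [NeZero n] {i j : Fin n} : adjV i j ↔ adjV j i := Or.comm

section LowerBound

open Fin.NatCast

lemma not_adjV_natCast {n x y : ℕ} [NeZero n] (hx : 1 ≤ x) (hxy : x + 2 ≤ y) (hy : y < n) :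
    ¬ adjV (x : Fin n) (y : Fin n) := by
  rintro (h | h) <;> rw [← Nat.cast_add_one] at h <;> have h := congrArg Fin.val h <;>
    simp only [Fin.val_natCast, Nat.mod_eq_of_lt hy, Nat.mod_eq_of_lt (by omega : x < n)] at h
  · rw [Nat.mod_eq_of_lt (by omega)] at h; omega
  · rcases (by omega : y + 1 < n ∨ y + 1 = n) with h' | h'
    · rw [Nat.mod_eq_of_lt h'] at h; omega
    · rw [h', Nat.mod_self] at h; omega

variable {n : ℕ} [NeZero n] {p : Fin n → Pt}

lemma IsConvexPolygon.zero_le_mul_cross2_of_nc (hp : IsConvexPolygon p) {i j k l : Fin n}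
    (hij : i ≠ j) (h : NC (p i) (p j) (p k) (p l)) :
    0 ≤ cross2 (p i) (p j) (p k) * cross2 (p i) (p j) (p l) :=
  hp.2.range.zero_le_mul_cross2_of_nc (mem_range_self i) (mem_range_self j) (mem_range_self k)
    (mem_range_self l) (hp.1.2.1.ne hij) h

lemma IsConvexPolygon.nc_of_zero_le_mul_cross2 (hp : IsConvexPolygon p) {i j k l : Fin n}
    (hij : i ≠ j) (hkl : ¬ (k ∈ ({i, j} : Set (Fin n)) ∧ l ∈ ({i, j} : Set (Fin n))))
    (h : 0 ≤ cross2 (p i) (p j) (p k) * cross2 (p i) (p j) (p l)) :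
    NC (p i) (p j) (p k) (p l) :=
  hp.2.range.nc_of_zero_le_mul_cross2 (mem_range_self i) (mem_range_self j) (mem_range_self k)
    (mem_range_self l) (hp.1.2.1.ne hij) (by simpa [hp.1.2.1.eq_iff] using hkl) h

/-- Walking along the arc `a + 1, …, a + (k - 1)`, consecutive vertices stay on the same side of
the chord `ab`, since the side joining them does not meet it. -/
lemma IsConvexPolygon.mul_cross2_pos_of_arc (hp : IsConvexPolygon p) {a b : Fin n} {k : ℕ}
    (hk : k < n) (hb : a + (k : Fin n) = b)
    (hside : ∀ s, 1 ≤ s → s + 2 ≤ k → NC (p a) (p b) (p (a + s)) (p (a + s + 1)))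
    {s t : ℕ} (hs : 1 ≤ s) (hs' : s < k) (ht : 1 ≤ t) (ht' : t < k) :
    0 < cross2 (p a) (p b) (p (a + s)) * cross2 (p a) (p b) (p (a + t)) := by
  subst hb
  have hne : ∀ {s t : ℕ}, s < n → t < n → s ≠ t → a + (s : Fin n) ≠ a + t :=
    fun hs ht h => (Fin.add_natCast_inj a hs ht).not.2 h
  have hne0 : ∀ {s : ℕ}, s < n → s ≠ 0 → a + (s : Fin n) ≠ a := fun hs h => by
    simpa using hne hs (t := 0) (by omega) h
  have hab : a ≠ a + k := (hne0 hk (by omega)).symm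
  refine mul_pos_of_chain (f := fun s => cross2 (p a) (p (a + k)) (p (a + s))) (lo := 1)
    (hi := k - 1) (fun s h₁ h₂ => ?_) (fun s h₁ h₂ => ?_) hs (by omega) ht (by omega)
  · exact hp.cross2_ne_zero hab (hne0 (by omega) (by omega)) (hne (by omega) hk (by omega))
  · have := hp.zero_le_mul_cross2_of_nc hab (hside s h₁ (by omega))
    rwa [Nat.cast_add_one, ← add_assoc]

/-- The arc from `i + 1` around to `i` consists of sides, which meet side `i` only at common
ends. -/
lemma IsConvexPolygon.mul_cross2_pos_of_ne (hp : IsConvexPolygon p) (i : Fin n) {j k : Fin n}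
    (hj : j ≠ i) (hj' : j ≠ i + 1) (hk : k ≠ i) (hk' : k ≠ i + 1) :
    0 < cross2 (p i) (p (i + 1)) (p j) * cross2 (p i) (p (i + 1)) (p k) := by
  have hn := hp.1.1
  have hb : i + 1 + ((n - 1 : ℕ) : Fin n) = i := by
    rw [add_assoc, ← Nat.cast_one, ← Nat.cast_add, Nat.add_sub_cancel' (by omega)]
    simp
  have hpos : ∀ {j : Fin n}, j ≠ i → j ≠ i + 1 →
      1 ≤ (j - (i + 1)).val ∧ (j - (i + 1)).val < n - 1 ∧
        i + 1 + ((j - (i + 1)).val : Fin n) = j := by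
    intro j h h'
    have hj : i + 1 + ((j - (i + 1)).val : Fin n) = j := by simp
    have hlt := (j - (i + 1)).isLt
    refine ⟨Nat.one_le_iff_ne_zero.2 fun h0 => h' ?_, ?_, hj⟩
    · rw [← hj, h0]; simp
    · refine lt_of_le_of_ne (by omega) fun h1 => h ?_
      rw [← hj, h1, hb]
  obtain ⟨hj₁, hj₂, hj₃⟩ := hpos hj hj'
  obtain ⟨hk₁, hk₂, hk₃⟩ := hpos hk hk'
  have := hp.mul_cross2_pos_of_arc (by omega) hb (fun s h₁ h₂ => ?_) hj₁ hj₂ hk₁ hk₂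
  · rwa [hj₃, hk₃, mul_cross2_swap] at this
  · refine nc_swap_left.2 (hp.1.2.2 i _ fun h => ?_)
    have := (Fin.add_natCast_inj (i + 1) (s := n - 1) (t := s) (by omega) (by omega)).1
      (hb.trans h)
    omega

lemma IsConvexPolygon.nc_side (hp : IsConvexPolygon p) {a b : Fin n} (hab : a ≠ b)
    (hadj : ¬ adjV a b) (m : Fin n) : NC (p a) (p b) (p m) (p (m + 1)) := by
  refine NC.symm (hp.nc_of_zero_le_mul_cross2
    (Fin.add_one_ne_self (by have := hp.1.1; omega) m).symm ?_ ?_)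
  · rintro ⟨ha, hb⟩
    simp only [mem_insert_iff, mem_singleton_iff] at ha hb
    rcases ha with rfl | rfl <;> rcases hb with rfl | rfl
    exacts [hab rfl, hadj (Or.inl rfl), hadj (Or.inr rfl), hab rfl]
  by_cases ha : a = m ∨ a = m + 1
  · rcases ha with rfl | rfl <;> simp
  by_cases hb : b = m ∨ b = m + 1
  · rcases hb with rfl | rfl <;> simp
  push Not at ha hb
  exact (hp.mul_cross2_pos_of_ne m ha.1 ha.2 hb.1 hb.2).le

end LowerBound

/-- The path `1, n - 1, 2, n - 2, 3, …`; each of its edges lies inside the arc cut off by the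
previous one. -/
def zigzag (n j : ℕ) : ℕ := if j % 2 = 0 then j / 2 + 1 else n - 1 - j / 2

lemma zigzag_lt {n j : ℕ} (hj : j + 3 ≤ n) : zigzag n j < n := by
  unfold zigzag; split_ifs <;> omega

lemma zigzag_injOn {n j j' : ℕ} (hj : j + 3 ≤ n) (hj' : j' + 3 ≤ n)
    (h : zigzag n j = zigzag n j') : j = j' := by
  unfold zigzag at h; split_ifs at h <;> omega

lemma zigzag_edge {n k : ℕ} (hk : k + 4 ≤ n) :
    1 ≤ min (zigzag n k) (zigzag n (k + 1)) ∧
    min (zigzag n k) (zigzag n (k + 1)) + 2 ≤ max (zigzag n k) (zigzag n (k + 1)) ∧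
    max (zigzag n k) (zigzag n (k + 1)) < n := by
  unfold zigzag; split_ifs <;> omega

lemma zigzag_mem_edge {n k l : ℕ} (hkl : k ≤ l) (hl : l + 3 ≤ n) :
    min (zigzag n k) (zigzag n (k + 1)) ≤ zigzag n l ∧
    zigzag n l ≤ max (zigzag n k) (zigzag n (k + 1)) := by
  unfold zigzag; split_ifs <;> omega

section Zigzag

open Fin.NatCast

variable {n : ℕ} [NeZero n] {p : Fin n → Pt}

lemma IsConvexPolygon.zero_le_mul_cross2_of_between (hp : IsConvexPolygon p) {x y c d : ℕ}
    (hxy : 1 ≤ min x y ∧ min x y + 2 ≤ max x y ∧ max x y < n)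
    (hc : min x y ≤ c ∧ c ≤ max x y) (hd : min x y ≤ d ∧ d ≤ max x y) :
    0 ≤ cross2 (p x) (p y) (p c) * cross2 (p x) (p y) (p d) := by
  wlog hle : x ≤ y generalizing x y
  · rw [← mul_cross2_swap]
    rw [min_comm, max_comm] at hxy hc hd
    exact this hxy hc hd (by omega)
  rw [min_eq_left hle, max_eq_right hle] at hxy hc hd
  have hcast : ∀ {c : ℕ}, x ≤ c → (x : Fin n) + ((c - x : ℕ) : Fin n) = c := fun h => by
    rw [← Nat.cast_add, Nat.add_sub_cancel' h]
  by_cases hc' : c = x ∨ c = y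
  · rcases hc' with rfl | rfl <;> simp
  by_cases hd' : d = x ∨ d = y
  · rcases hd' with rfl | rfl <;> simp
  have hxy' : (x : Fin n) ≠ y := (Fin.natCast_inj_of_lt (by omega) hxy.2.2).not.2 (by omega)
  have := hp.mul_cross2_pos_of_arc (k := y - x) (by omega) (hcast hle)
    (fun _ _ _ => hp.nc_side hxy' (not_adjV_natCast hxy.1 hxy.2.1 hxy.2.2) _)
    (s := c - x) (t := d - x) (by omega) (by omega) (by omega) (by omega)
  rw [hcast hc.1, hcast hd.1] at this
  exact this.le

lemma natCast_zigzag_ne (hn : 3 ≤ n) {j j' : ℕ} (hj : j ≤ n - 3) (hj' : j' ≤ n - 3)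
    (h : j ≠ j') : (zigzag n j : Fin n) ≠ zigzag n j' :=
  (Fin.natCast_inj_of_lt (zigzag_lt (by omega)) (zigzag_lt (by omega))).not.2
    fun h' => h (zigzag_injOn (by omega) (by omega) h')

lemma not_adjV_zigzag {k : ℕ} (hk : k < n - 3) :
    ¬ adjV (zigzag n k : Fin n) (zigzag n (k + 1)) := by
  obtain ⟨h₁, h₂, h₃⟩ := zigzag_edge (n := n) (k := k) (by omega)
  rcases le_total (zigzag n k) (zigzag n (k + 1)) with h | h
  · rw [min_eq_left h, max_eq_right h] at *
    exact not_adjV_natCast h₁ h₂ h₃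
  · rw [min_eq_right h, max_eq_left h] at *
    exact fun h' => not_adjV_natCast h₁ h₂ h₃ (adjV_comm.1 h')

lemma IsConvexPolygon.nc_zigzag (hp : IsConvexPolygon p) {k l : ℕ} (hkl : k < l)
    (hl : l < n - 3) :
    NC (p (zigzag n k)) (p (zigzag n (k + 1))) (p (zigzag n l)) (p (zigzag n (l + 1))) := by
  have hn := hp.1.1
  refine hp.nc_of_zero_le_mul_cross2 (natCast_zigzag_ne hn (by omega) (by omega) (by omega))
    (fun h => ?_) (hp.zero_le_mul_cross2_of_between (zigzag_edge (by omega))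
      (zigzag_mem_edge hkl.le (by omega)) (zigzag_mem_edge (by omega) (by omega)))
  simp only [mem_insert_iff, mem_singleton_iff] at h
  rcases h.2 with h | h
  exacts [natCast_zigzag_ne hn (by omega) (by omega) (by omega) h,
    natCast_zigzag_ne hn (by omega) (by omega) (by omega) h]

theorem IsConvexPolygon.exists_pathEmbedding (hp : IsConvexPolygon p) :
    ∃ f : Fin (n - 3 + 1) → Fin n, IsPathEmbedding p f := by
  have hn := hp.1.1
  refine ⟨fun j => (zigzag n j : Fin n), fun j j' h => ?_, fun k => ?_, fun k l hkl => ?_,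
    fun k m => ?_⟩
  · by_contra hne
    exact natCast_zigzag_ne hn (by omega) (by omega) (fun h' => hne (Fin.ext h')) h
  · simpa using not_adjV_zigzag k.isLt
  · simp only [Fin.val_castSucc, Fin.val_succ]
    rcases lt_or_gt_of_ne (Fin.val_ne_of_ne hkl) with h | h
    · exact hp.nc_zigzag h l.isLt
    · exact (hp.nc_zigzag h k.isLt).symm
  · simp only [Fin.val_castSucc, Fin.val_succ]
    exact hp.nc_side (natCast_zigzag_ne hn (by omega) (by omega) (by omega))
      (not_adjV_zigzag k.isLt) m

end Zigzag

theorem stmt_14_general (n : ℕ) [NeZero n]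
    (p : Fin n → Pt) (hP : IsConvexPolygon p) :
    (∃ f : Fin ((n - 3) + 1) → Fin n, IsPathEmbedding p f) ∧
    (∀ (e : ℕ) (f : Fin (e + 1) → Fin n), IsPathEmbedding p f → e ≤ n - 3) :=
  ⟨hP.exists_pathEmbedding, fun _ _ hf => hf.le hP⟩

/-- A maximum-size path graph planarly polygon-embeddable in a convex polygon with `n ≥ 3`
vertices has exactly `n - 3` edges: a path with `n - 3` edges embeds, and no path with more
edges does. -/
theorem stmt_14 (n : ℕ) [NeZero n] (hn : 3 ≤ n)
    (p : Fin n → Pt) (hP : IsConvexPolygon p) :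
    (∃ f : Fin ((n - 3) + 1) → Fin n, IsPathEmbedding p f) ∧
    (∀ (e : ℕ) (f : Fin (e + 1) → Fin n), IsPathEmbedding p f → e ≤ n - 3) :=
  stmt_14_general n p hP
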